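/- (Conductance asymptotics in Theorem 1.2.) Let (x_n, y_n)_{n≥0} be a sequence of positive pairs following the explicit SG recursion with x0 > y0 > 0, and define the conductances a_n = x_n/(y_n(2x_n + y_n)) and b_n = 1/(2x_n + y_n). Then there exists a constant C > 0 such that for all n ≥ 0: C⁻¹·2^n ≤ a_n ≤ C·2^n and C⁻¹·(3/2)^n ≤ b_n ≤ C·(3/2)^n. -/
import Mathlib

noncomputable section

def NSG (x y : ℝ) : ℝ := Real.sqrt (4 * x ^ 2 + 6 * x * y + 6 * y ^ 2)

def FollowsSG (X Y : ℕ → ℝ) : Prop :=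
  (∀ n, 0 < X n ∧ 0 < Y n) ∧
  ∀ n, X (n + 1) = (14 * X n + 3 * Y n - 2 * NSG (X n) (Y n)) / 15 ∧
       Y (n + 1) = (-2 * X n + Y n + NSG (X n) (Y n)) / 5

lemma nsg_lower {x y : ℝ} (hx : 0 < x) (hy : 0 < y) :
    2 * x + 3 * y / 2 ≤ NSG x y := by
  have h1 : (2 * x + 3 * y / 2) ^ 2 ≤ 4 * x ^ 2 + 6 * x * y + 6 * y ^ 2 := by nlinarith
  have := Real.sqrt_le_sqrt h1
  rwa [Real.sqrt_sq (by positivity)] at this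

lemma nsg_upper_crude {x y : ℝ} (hx : 0 < x) (hy : 0 < y) (hyx : y ≤ x) :
    NSG x y ≤ 2 * x + 2 * y := by
  have h1 : 4 * x ^ 2 + 6 * x * y + 6 * y ^ 2 ≤ (2 * x + 2 * y) ^ 2 := by nlinarith
  have := Real.sqrt_le_sqrt h1
  rwa [Real.sqrt_sq (by positivity)] at this

lemma nsg_upper {x y : ℝ} (hx : 0 < x) (hy : 0 < y) :
    NSG x y ≤ 2 * x + 3 * y / 2 + 15 * y ^ 2 / (16 * x) := by
  set d : ℝ := 15 * y ^ 2 / (16 * x) with hd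
  have hd0 : 0 ≤ d := by positivity
  have hdx : d * (16 * x) = 15 * y ^ 2 := by rw [hd]; field_simp
  have h1 : 4 * x ^ 2 + 6 * x * y + 6 * y ^ 2 ≤ (2 * x + 3 * y / 2 + d) ^ 2 := by
    nlinarith [sq_nonneg d, mul_nonneg hd0 hy.le]
  have := Real.sqrt_le_sqrt h1
  rwa [Real.sqrt_sq (by positivity)] at this

/-- `exp (-u) ≤ 1 - u/2` for `0 ≤ u ≤ 1`. -/
lemma exp_neg_le {u : ℝ} (h0 : 0 ≤ u) (h1 : u ≤ 1) :
    Real.exp (-u) ≤ 1 - u / 2 := by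
  have he : 1 + u ≤ Real.exp u := by linarith [Real.add_one_le_exp u]
  have hp : (0:ℝ) < 1 + u := by linarith
  have h2 : (Real.exp u)⁻¹ ≤ (1 + u)⁻¹ := by
    apply inv_anti₀ hp he
  have h3 : (1 + u)⁻¹ ≤ 1 - u / 2 := by
    rw [inv_le_iff_one_le_mul₀ hp]
    nlinarith
  calc Real.exp (-u) = (Real.exp u)⁻¹ := Real.exp_neg u
    _ ≤ (1 + u)⁻¹ := h2
    _ ≤ 1 - u / 2 := h3

set_option maxHeartbeats 4000000 in
theorem stmt12 (X Y : ℕ → ℝ) (h : FollowsSG X Y) (h0 : Y 0 < X 0)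
    (a b : ℕ → ℝ)
    (ha : ∀ n, a n = X n / (Y n * (2 * X n + Y n)))
    (hb : ∀ n, b n = 1 / (2 * X n + Y n)) :
    ∃ C : ℝ, 0 < C ∧ ∀ n,
      C⁻¹ * 2 ^ n ≤ a n ∧ a n ≤ C * 2 ^ n ∧
      C⁻¹ * (3 / 2 : ℝ) ^ n ≤ b n ∧ b n ≤ C * (3 / 2 : ℝ) ^ n := by
  obtain ⟨hpos, hrec⟩ := h
  have hx : ∀ n, 0 < X n := fun n => (hpos n).1
  have hy : ∀ n, 0 < Y n := fun n => (hpos n).2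
  obtain ⟨ρ, hρdef⟩ : ∃ ρ : ℝ, ρ = Y 0 / X 0 := ⟨_, rfl⟩
  have hρ0 : 0 < ρ := hρdef ▸ div_pos (hy 0) (hx 0)
  have hρ1 : ρ < 1 := hρdef ▸ (div_lt_one (hx 0)).2 h0
  obtain ⟨κ, hκdef⟩ : ∃ κ : ℝ, κ = 9 / (10 - ρ) := ⟨_, rfl⟩
  have h10 : (0:ℝ) < 10 - ρ := by linarith
  have hκ0 : 0 < κ := by rw [hκdef]; positivity
  have hκ1 : κ < 1 := by rw [hκdef, div_lt_one h10]; linarith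
  have h1κ : (0:ℝ) < 1 - κ := by linarith
  obtain ⟨c, hcdef⟩ : ∃ c : ℝ, c = (3/8) * ρ / (1 - κ) := ⟨_, rfl⟩
  have hc0 : 0 < c := by rw [hcdef]; positivity
  have hcκ : c * (1 - κ) = (3/8) * ρ := by
    rw [hcdef]; field_simp
  -- main induction
  have main : ∀ n, Y n < X n ∧ X n ≤ X 0 * (2/3)^n ∧ Y 0 * (1/2)^n ≤ Y n ∧
      Y n / X n ≤ ρ * κ^n ∧ Y n * 2^n ≤ Y 0 * Real.exp (c*(1-κ^n)) ∧
      X 0 * Real.exp (-(c*(1-κ^n))) * (2/3)^n ≤ X n := by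
    intro n
    induction n with
    | zero =>
      refine ⟨h0, by simp, by simp, by rw [hρdef]; simp, by simp, by simp⟩
    | succ n ih =>
      obtain ⟨hlt, hXu, hYl, hr, hYu, hXl⟩ := ih
      have hxn := hx n; have hyn := hy n
      have hN1 := nsg_lower hxn hyn
      have hN2 := nsg_upper hxn hyn
      have hN3 := nsg_upper_crude hxn hyn hlt.le
      obtain ⟨hX', hY'⟩ := hrec n
      have hκn0 : 0 < κ ^ n := pow_pos hκ0 n
      have hκn1 : κ ^ n ≤ 1 := pow_le_one₀ hκ0.le hκ1.le
      have hyρ : Y n ≤ ρ * κ^n * X n := by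
        have := (div_le_iff₀ hxn).1 hr
        linarith
      have hρκ1 : ρ * κ ^ n ≤ 1 := by nlinarith
      have hρκ0 : 0 < ρ * κ ^ n := by positivity
      -- (1) order preserved
      have hlt' : Y (n+1) < X (n+1) := by
        rw [hX', hY']; linarith
      -- (2) X (n+1) ≤ (2/3) X n
      have hXstep : X (n+1) ≤ (2/3) * X n := by
        rw [hX']; linarith
      -- (3) Y (n+1) ≥ Y n / 2
      have hYstep : Y n / 2 ≤ Y (n+1) := by
        rw [hY']; linarith
      -- crude steps for ratio
      have hYcrude : Y (n+1) ≤ (3/5) * Y n := by rw [hY']; linarith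
      have hXcrude : (10 * X n - Y n) / 15 ≤ X (n+1) := by rw [hX']; linarith
      have hx' := hx (n+1); have hy' := hy (n+1)
      -- (4) ratio contraction
      have hr' : Y (n+1) / X (n+1) ≤ ρ * κ^(n+1) := by
        rw [div_le_iff₀ hx']
        have key : (3/5) * Y n ≤ ρ * κ^(n+1) * ((10 * X n - Y n) / 15) := by
          have h9 : ρ * κ^(n+1) * ((10 * X n - Y n) / 15)
              = ρ * κ^n * (9 * (10 * X n - Y n)) / (15 * (10 - ρ)) := by
            rw [pow_succ, hκdef]; field_simp
          rw [h9, le_div_iff₀ (by positivity)]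
          nlinarith [mul_nonneg (mul_nonneg hρ0.le (sub_nonneg.2 hκn1)) hyn.le]
        calc Y (n+1) ≤ (3/5) * Y n := hYcrude
          _ ≤ ρ * κ^(n+1) * ((10 * X n - Y n) / 15) := key
          _ ≤ ρ * κ^(n+1) * X (n+1) :=
              mul_le_mul_of_nonneg_left hXcrude (by positivity)
      -- ratio scalar bounds
      have hu : Y n ^ 2 / X n ≤ ρ * κ^n * Y n := by
        rw [div_le_iff₀ hxn]; nlinarith
      have hu2 : Y n ^ 2 / X n ≤ ρ * κ^n * X n := by
        rw [div_le_iff₀ hxn]; nlinarith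
      -- (5) Y upper
      have hYu' : Y (n+1) * 2^(n+1) ≤ Y 0 * Real.exp (c*(1-κ^(n+1))) := by
        have hstep : Y (n+1) ≤ Y n / 2 + (3/16) * (Y n ^ 2 / X n) := by
          rw [hY']
          have e : 15 * Y n ^ 2 / (16 * X n) = (15/16) * (Y n ^ 2 / X n) := by ring
          rw [e] at hN2
          linarith
        have hstep2 : 2 * Y (n+1) ≤ (1 + (3/8) * (ρ * κ^n)) * Y n := by
          nlinarith
        have hexp1 : 1 + (3/8) * (ρ * κ^n) ≤ Real.exp ((3/8) * (ρ * κ^n)) := by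
          linarith [Real.add_one_le_exp ((3/8) * (ρ * κ^n))]
        calc Y (n+1) * 2^(n+1) = (2 * Y (n+1)) * 2^n := by rw [pow_succ]; ring
          _ ≤ ((1 + (3/8) * (ρ * κ^n)) * Y n) * 2^n := by
              apply mul_le_mul_of_nonneg_right hstep2 (by positivity)
          _ = (1 + (3/8) * (ρ * κ^n)) * (Y n * 2^n) := by ring
          _ ≤ Real.exp ((3/8) * (ρ * κ^n)) * (Y 0 * Real.exp (c*(1-κ^n))) := by
              apply mul_le_mul hexp1 hYu (by positivity) (Real.exp_pos _).le
          _ = Y 0 * Real.exp (c*(1-κ^n) + (3/8) * (ρ * κ^n)) := by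
              rw [Real.exp_add]; ring
          _ = Y 0 * Real.exp (c*(1-κ^(n+1))) := by
              congr 2
              rw [pow_succ]
              linear_combination (-(κ ^ n)) * hcκ
      -- (6) X lower
      have hXl' : X 0 * Real.exp (-(c*(1-κ^(n+1)))) * (2/3)^(n+1) ≤ X (n+1) := by
        have hstep : (2/3) * X n - (1/8) * (Y n ^ 2 / X n) ≤ X (n+1) := by
          rw [hX']
          have e : 15 * Y n ^ 2 / (16 * X n) = (15/16) * (Y n ^ 2 / X n) := by ring
          rw [e] at hN2
          linarith
        have hstep2 : (2/3) * X n * (1 - (3/16) * (ρ * κ^n)) ≤ X (n+1) := by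
          nlinarith
        have hexp2 : Real.exp (-((3/8) * (ρ * κ^n))) ≤ 1 - (3/16) * (ρ * κ^n) := by
          have := exp_neg_le (u := (3/8) * (ρ * κ^n)) (by positivity) (by nlinarith)
          convert this using 2
          ring
        have eexp : -(c*(1-κ^(n+1))) = -(c*(1-κ^n)) + -((3/8) * (ρ * κ^n)) := by
          rw [pow_succ]
          linear_combination (-(κ ^ n)) * hcκ
        calc X 0 * Real.exp (-(c*(1-κ^(n+1)))) * (2/3)^(n+1)
            = (2/3) * (X 0 * Real.exp (-(c*(1-κ^n))) * (2/3)^n)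
              * Real.exp (-((3/8) * (ρ * κ^n))) := by
              rw [eexp, Real.exp_add, pow_succ]
              ring
          _ ≤ (2/3) * X n * Real.exp (-((3/8) * (ρ * κ^n))) := by
              apply mul_le_mul_of_nonneg_right _ (Real.exp_pos _).le
              apply mul_le_mul_of_nonneg_left hXl (by norm_num)
          _ ≤ (2/3) * X n * (1 - (3/16) * (ρ * κ^n)) := by
              apply mul_le_mul_of_nonneg_left hexp2 (by positivity)
          _ ≤ X (n+1) := hstep2
      exact ⟨hlt', by
        calc X (n+1) ≤ (2/3) * X n := hXstep
          _ ≤ (2/3) * (X 0 * (2/3)^n) := by linarith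
          _ = X 0 * (2/3)^(n+1) := by rw [pow_succ]; ring,
        by
        calc Y 0 * (1/2)^(n+1) = (Y 0 * (1/2)^n) / 2 := by rw [pow_succ]; ring
          _ ≤ Y n / 2 := by linarith
          _ ≤ Y (n+1) := hYstep,
        hr', hYu', hXl'⟩
    -- derived uniform bounds
  obtain ⟨E, hEdef⟩ : ∃ E : ℝ, E = Real.exp c := ⟨_, rfl⟩
  have hE0 : 0 < E := hEdef ▸ Real.exp_pos c
  have hE1 : 1 ≤ E := by
    rw [hEdef]
    calc (1:ℝ) = Real.exp 0 := Real.exp_zero.symm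
      _ ≤ Real.exp c := Real.exp_le_exp.2 hc0.le
  have hXub : ∀ n, X n ≤ X 0 * (2/3)^n := fun n => (main n).2.1
  have hYlb : ∀ n, Y 0 * (1/2)^n ≤ Y n := fun n => (main n).2.2.1
  have hXlb : ∀ n, X 0 * E⁻¹ * (2/3)^n ≤ X n := by
    intro n
    have h1 := (main n).2.2.2.2.2
    have hκn1 : κ ^ n ≤ 1 := pow_le_one₀ hκ0.le hκ1.le
    have hκn0 : (0:ℝ) < κ ^ n := pow_pos hκ0 n
    have h2 : Real.exp (-c) ≤ Real.exp (-(c*(1-κ^n))) := by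
      apply Real.exp_le_exp.2
      nlinarith
    have h3 : E⁻¹ = Real.exp (-c) := by rw [hEdef, Real.exp_neg]
    calc X 0 * E⁻¹ * (2/3)^n = X 0 * Real.exp (-c) * (2/3)^n := by rw [h3]
      _ ≤ X 0 * Real.exp (-(c*(1-κ^n))) * (2/3)^n := by
          apply mul_le_mul_of_nonneg_right _ (by positivity)
          exact mul_le_mul_of_nonneg_left h2 (hx 0).le
      _ ≤ X n := h1
  have hYub : ∀ n, Y n ≤ Y 0 * E * (1/2)^n := by
    intro n
    have h1 := (main n).2.2.2.2.1
    have hκn1 : κ ^ n ≤ 1 := pow_le_one₀ hκ0.le hκ1.le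
    have hκn0 : (0:ℝ) < κ ^ n := pow_pos hκ0 n
    have h2 : Real.exp (c*(1-κ^n)) ≤ E := by
      rw [hEdef]; apply Real.exp_le_exp.2; nlinarith
    have h4 : Y n * 2^n ≤ Y 0 * E := by
      calc Y n * 2^n ≤ Y 0 * Real.exp (c*(1-κ^n)) := h1
        _ ≤ Y 0 * E := mul_le_mul_of_nonneg_left h2 (hy 0).le
    have id1 : (2:ℝ)^n * (1/2)^n = 1 := by
      rw [← mul_pow]; norm_num
    calc Y n = (Y n * 2^n) * (1/2)^n := by
          rw [mul_assoc, id1, mul_one]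
      _ ≤ (Y 0 * E) * (1/2)^n := mul_le_mul_of_nonneg_right h4 (by positivity)
  -- constants
  obtain ⟨S1, hS1def⟩ : ∃ S1 : ℝ, S1 = 2 * X 0 + Y 0 * E := ⟨_, rfl⟩
  have hS10 : 0 < S1 := by
    rw [hS1def]; have := mul_pos (hy 0) hE0; have := hx 0; linarith
  obtain ⟨S2, hS2def⟩ : ∃ S2 : ℝ, S2 = 2 * X 0 * E⁻¹ := ⟨_, rfl⟩
  have hS20 : 0 < S2 := by
    rw [hS2def]; exact mul_pos (by linarith [hx 0]) (inv_pos.2 hE0)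
  -- bounds on s n = 2 X n + Y n
  have hsu : ∀ n, 2 * X n + Y n ≤ S1 * (2/3)^n := by
    intro n
    have h1 : (1/2:ℝ)^n ≤ (2/3)^n := by
      apply pow_le_pow_left₀ (by norm_num) (by norm_num)
    have h2 := hYub n
    have h3 : Y n ≤ Y 0 * E * (2/3)^n := by
      calc Y n ≤ Y 0 * E * (1/2)^n := h2
        _ ≤ Y 0 * E * (2/3)^n :=
            mul_le_mul_of_nonneg_left h1 (mul_pos (hy 0) hE0).le
    have h4 := hXub n
    rw [hS1def]
    nlinarith [pow_pos (show (0:ℝ) < 2/3 by norm_num) n]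
  have hsl : ∀ n, S2 * (2/3)^n ≤ 2 * X n + Y n := by
    intro n
    have h1 := hXlb n
    have := hy n
    rw [hS2def]
    nlinarith
  have hs0 : ∀ n, 0 < 2 * X n + Y n := fun n => by
    have := hx n; have := hy n; linarith
  -- the four explicit bounds
  obtain ⟨A1, hA1def⟩ : ∃ A1 : ℝ, A1 = 1 / (2 * Y 0) := ⟨_, rfl⟩
  have hA10 : 0 < A1 := by
    rw [hA1def]; exact div_pos one_pos (by linarith [hy 0])
  obtain ⟨A2, hA2def⟩ : ∃ A2 : ℝ, A2 = X 0 * E⁻¹ / (Y 0 * E * S1) := ⟨_, rfl⟩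
  have hA20 : 0 < A2 := by
    rw [hA2def]
    exact div_pos (mul_pos (hx 0) (inv_pos.2 hE0))
      (mul_pos (mul_pos (hy 0) hE0) hS10)
  obtain ⟨B1, hB1def⟩ : ∃ B1 : ℝ, B1 = 1 / S2 := ⟨_, rfl⟩
  have hB10 : 0 < B1 := by rw [hB1def]; exact div_pos one_pos hS20
  obtain ⟨B2, hB2def⟩ : ∃ B2 : ℝ, B2 = 1 / S1 := ⟨_, rfl⟩
  have hB20 : 0 < B2 := by rw [hB2def]; exact div_pos one_pos hS10
  have haub : ∀ n, a n ≤ A1 * 2^n := by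
    intro n
    have hxn := hx n; have hyn := hy n
    have p2 : (0:ℝ) < 2^n := by positivity
    have step1 : a n ≤ 1 / (2 * Y n) := by
      rw [ha n, div_le_div_iff₀ (by positivity) (by positivity)]
      nlinarith
    have step2 : 1 / (2 * Y n) ≤ A1 * 2^n := by
      rw [div_le_iff₀ (by positivity)]
      have id1 : (2:ℝ)^n * (1/2)^n = 1 := by rw [← mul_pow]; norm_num
      have h5 := hYlb n
      have h6 : A1 * 2^n * (2 * (Y 0 * (1/2)^n)) ≤ A1 * 2^n * (2 * Y n) := by
        apply mul_le_mul_of_nonneg_left (by linarith) (mul_pos hA10 p2).le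
      have hA1' : A1 * (2 * Y 0) = 1 := by
        rw [hA1def]
        exact div_mul_cancel₀ 1 (by linarith [hy 0])
      have h7 : A1 * 2^n * (2 * (Y 0 * (1/2)^n)) = 1 := by
        calc A1 * 2^n * (2 * (Y 0 * (1/2)^n))
            = (A1 * (2 * Y 0)) * ((2:ℝ)^n * (1/2)^n) := by ring
          _ = 1 := by rw [hA1', id1, mul_one]
      linarith
    linarith
  have halb : ∀ n, A2 * 2^n ≤ a n := by
    intro n
    have hxn := hx n; have hyn := hy n
    have hsn := hs0 n
    have p2 : (0:ℝ) < 2^n := by positivity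
    rw [ha n, le_div_iff₀ (by positivity)]
    have id1 : (2:ℝ)^n * (1/2)^n = 1 := by rw [← mul_pow]; norm_num
    have h1 : Y n * (2 * X n + Y n) ≤ (Y 0 * E * (1/2)^n) * (S1 * (2/3)^n) := by
      apply mul_le_mul (hYub n) (hsu n) (by linarith) _
      have : (0:ℝ) < (1/2:ℝ)^n := by positivity
      nlinarith [mul_pos (hy 0) hE0]
    have h2 : A2 * 2^n * (Y n * (2 * X n + Y n))
        ≤ A2 * 2^n * ((Y 0 * E * (1/2)^n) * (S1 * (2/3)^n)) :=
      mul_le_mul_of_nonneg_left h1 (mul_pos hA20 p2).le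
    have hA2' : A2 * (Y 0 * E * S1) = X 0 * E⁻¹ := by
      rw [hA2def]
      exact div_mul_cancel₀ _ (ne_of_gt (mul_pos (mul_pos (hy 0) hE0) hS10))
    have h3 : A2 * 2^n * ((Y 0 * E * (1/2)^n) * (S1 * (2/3)^n))
        = X 0 * E⁻¹ * (2/3)^n := by
      calc A2 * 2^n * ((Y 0 * E * (1/2)^n) * (S1 * (2/3)^n))
          = (A2 * (Y 0 * E * S1)) * ((2:ℝ)^n * (1/2)^n) * (2/3)^n := by ring
        _ = X 0 * E⁻¹ * (2/3)^n := by rw [hA2', id1, mul_one]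
    have h4 := hXlb n
    linarith
  have hbub : ∀ n, b n ≤ B1 * (3/2)^n := by
    intro n
    have hsn := hs0 n
    have p32 : (0:ℝ) < (3/2:ℝ)^n := by positivity
    rw [hb n, div_le_iff₀ hsn]
    have id2 : ((3:ℝ)/2)^n * (2/3)^n = 1 := by rw [← mul_pow]; norm_num
    have h1 := hsl n
    have h2 : B1 * (3/2)^n * (S2 * (2/3)^n) ≤ B1 * (3/2)^n * (2 * X n + Y n) :=
      mul_le_mul_of_nonneg_left h1 (mul_pos hB10 p32).le
    have hB1' : B1 * S2 = 1 := by
      rw [hB1def]; exact div_mul_cancel₀ 1 (ne_of_gt hS20)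
    have h3 : B1 * (3/2)^n * (S2 * (2/3)^n) = 1 := by
      calc B1 * (3/2)^n * (S2 * (2/3)^n)
          = (B1 * S2) * (((3:ℝ)/2)^n * (2/3)^n) := by ring
        _ = 1 := by rw [hB1', id2, mul_one]
    linarith
  have hblb : ∀ n, B2 * (3/2)^n ≤ b n := by
    intro n
    have hsn := hs0 n
    have p32 : (0:ℝ) < (3/2:ℝ)^n := by positivity
    rw [hb n, le_div_iff₀ hsn]
    have id2 : ((3:ℝ)/2)^n * (2/3)^n = 1 := by rw [← mul_pow]; norm_num
    have h1 := hsu n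
    have h2 : B2 * (3/2)^n * (2 * X n + Y n) ≤ B2 * (3/2)^n * (S1 * (2/3)^n) :=
      mul_le_mul_of_nonneg_left h1 (mul_pos hB20 p32).le
    have hB2' : B2 * S1 = 1 := by
      rw [hB2def]; exact div_mul_cancel₀ 1 (ne_of_gt hS10)
    have h3 : B2 * (3/2)^n * (S1 * (2/3)^n) = 1 := by
      calc B2 * (3/2)^n * (S1 * (2/3)^n)
          = (B2 * S1) * (((3:ℝ)/2)^n * (2/3)^n) := by ring
        _ = 1 := by rw [hB2', id2, mul_one]
    linarith
  -- choose C
  obtain ⟨C, hCdef⟩ : ∃ C : ℝ, C = max (max A1 A2⁻¹) (max B1 B2⁻¹) := ⟨_, rfl⟩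
  have hCA1 : A1 ≤ C := hCdef ▸ le_max_of_le_left (le_max_left _ _)
  have hCA2 : A2⁻¹ ≤ C := hCdef ▸ le_max_of_le_left (le_max_right _ _)
  have hCB1 : B1 ≤ C := hCdef ▸ le_max_of_le_right (le_max_left _ _)
  have hCB2 : B2⁻¹ ≤ C := hCdef ▸ le_max_of_le_right (le_max_right _ _)
  have hC0 : 0 < C := lt_of_lt_of_le hA10 hCA1
  have hinvA : C⁻¹ ≤ A2 := by
    rw [← inv_inv A2]
    exact inv_anti₀ (inv_pos.2 hA20) hCA2
  have hinvB : C⁻¹ ≤ B2 := by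
    rw [← inv_inv B2]
    exact inv_anti₀ (inv_pos.2 hB20) hCB2
  refine ⟨C, hC0, fun n => ?_⟩
  have p2 : (0:ℝ) < 2^n := by positivity
  have p32 : (0:ℝ) < (3/2:ℝ)^n := by positivity
  refine ⟨?_, ?_, ?_, ?_⟩
  · calc C⁻¹ * 2^n ≤ A2 * 2^n := mul_le_mul_of_nonneg_right hinvA p2.le
      _ ≤ a n := halb n
  · calc a n ≤ A1 * 2^n := haub n
      _ ≤ C * 2^n := mul_le_mul_of_nonneg_right hCA1 p2.le
  · calc C⁻¹ * (3/2:ℝ)^n ≤ B2 * (3/2:ℝ)^n :=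
        mul_le_mul_of_nonneg_right hinvB p32.le
      _ ≤ b n := hblb n
  · calc b n ≤ B1 * (3/2:ℝ)^n := hbub n
      _ ≤ C * (3/2:ℝ)^n := mul_le_mul_of_nonneg_right hCB1 p32.le
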